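/- arXiv:2007.13382 — 2 statements merged into one kernel-verified Lean document; each statement's English description precedes it below -/
import Mathlib

section
/- If f is monotone increasing submodular with f(opt) − f(S_{i−1}) > 0 for a finite optimal set opt of size k, then the element j maximizing the marginal gain over opt \ S_{i−1} satisfies f(S_{i−1} ∪ {j}) − f(S_{i−1}) ≥ (1/k) · (f(opt) − f(S_{i−1})). -/
/-!
Submodularity bounds the gain of adding all of `opt \ S` to `S` by the sum of the single-element
gains, each of which is at most the gain of `j`; monotonicity bounds `f opt` by `f (S ∪ opt)`.
Hence `f opt - f S ≤ |opt \ S| · gain(j) ≤ k · gain(j)`.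
-/

open Finset

section Submodular

variable {α : Type*} [DecidableEq α] (f : Finset α → ℝ)

lemma sub_le_sum_marginal_gain
    (hsub : ∀ (A B : Finset α), A ⊆ B → ∀ j ∉ B,
      f (insert j A) - f A ≥ f (insert j B) - f B)
    (S T : Finset α) :
    f (S ∪ T) - f S ≤ ∑ e ∈ T, (f (insert e S) - f S) := by
  induction T using Finset.induction with
  | empty => simp
  | @insert a T haT ih =>
    rw [sum_insert haT, union_insert]
    by_cases haS : a ∈ S
    · rw [insert_eq_self.mpr (mem_union_left T haS), insert_eq_self.mpr haS]
      linarith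
    · have hdiminishing := hsub S (S ∪ T) subset_union_left a (by simp [haS, haT])
      linarith

lemma sub_le_card_sdiff_mul_of_marginal_gain_le
    (hmono : ∀ A B : Finset α, A ⊆ B → f A ≤ f B)
    (hsub : ∀ (A B : Finset α), A ⊆ B → ∀ j ∉ B,
      f (insert j A) - f A ≥ f (insert j B) - f B)
    {S T : Finset α} {m : ℝ} (hm : ∀ e ∈ T \ S, f (insert e S) - f S ≤ m) :
    f T - f S ≤ #(T \ S) * m :=
  calc f T - f S ≤ f (S ∪ (T \ S)) - f S := by
        rw [union_sdiff_self_eq_union]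
        linarith [hmono T (S ∪ T) subset_union_right]
    _ ≤ ∑ e ∈ T \ S, (f (insert e S) - f S) := sub_le_sum_marginal_gain f hsub S (T \ S)
    _ ≤ ∑ _e ∈ T \ S, m := sum_le_sum hm
    _ = #(T \ S) * m := by rw [sum_const, nsmul_eq_mul]

end Submodular

theorem greedy_best_marginal_gain_general
    {α : Type*} [DecidableEq α] (f : Finset α → ℝ)
    (hmono : ∀ A B : Finset α, A ⊆ B → f A ≤ f B)
    (hsub : ∀ (A B : Finset α), A ⊆ B → ∀ j ∉ B,
      f (insert j A) - f A ≥ f (insert j B) - f B)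
    (k : ℕ) (hk : 1 ≤ k) (opt : Finset α) (hopt : opt.card = k)
    (S : Finset α)
    (j : α)
    (hjmax : ∀ j' ∈ opt \ S, f (insert j' S) - f S ≤ f (insert j S) - f S) :
    f (insert j S) - f S ≥ (1 / k) * (f opt - f S) := by
  have hgain : 0 ≤ f (insert j S) - f S := sub_nonneg.2 (hmono _ _ (subset_insert j S))
  have hcard : (#(opt \ S) : ℝ) ≤ k := by
    exact_mod_cast hopt ▸ card_le_card sdiff_subset
  have hkey : f opt - f S ≤ k * (f (insert j S) - f S) :=
    (sub_le_card_sdiff_mul_of_marginal_gain_le f hmono hsub hjmax).trans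
      (mul_le_mul_of_nonneg_right hcard hgain)
  rw [ge_iff_le, one_div, inv_mul_le_iff₀ (by exact_mod_cast hk)]
  exact hkey

theorem greedy_best_marginal_gain
    {α : Type*} [DecidableEq α] [Fintype α] (f : Finset α → ℝ)
    (hmono : ∀ A B : Finset α, A ⊆ B → f A ≤ f B)
    (hsub : ∀ (A B : Finset α), A ⊆ B → ∀ j ∉ B,
      f (insert j A) - f A ≥ f (insert j B) - f B)
    (k : ℕ) (hk : 1 ≤ k) (opt : Finset α) (hopt : opt.card = k)
    (hoptmax : ∀ T : Finset α, T.card = k → f T ≤ f opt)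
    (S : Finset α) (hne : (opt \ S).Nonempty)
    (hpos : 0 < f opt - f S)
    (j : α) (hj : j ∈ opt \ S)
    (hjmax : ∀ j' ∈ opt \ S, f (insert j' S) - f S ≤ f (insert j S) - f S) :
    f (insert j S) - f S ≥ (1 / k) * (f opt - f S) :=
  greedy_best_marginal_gain_general f hmono hsub k hk opt hopt S j hjmax
end

section
/- Greedy selection with exact best local improvements at each step on a monotone increasing nonnegative submodular function f with f(∅)=0 produces, after k steps, a set S_k with f(S_k) ≥ (1 − 1/e) · max_{|S| ≤ k} f(S). -/
/-!
By diminishing returns, the gap `f opt - f A` is at most the sum of the marginal gains at `A` of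
the at most `k` elements of `opt`, so the greedy gain at `A` is at least a `1/k` fraction of the
gap. The gap therefore shrinks by a factor `1 - 1/k` per step, and `(1 - 1/k) ^ k ≤ exp (-1)`.
-/

open Finset

section

variable {α : Type*} [DecidableEq α] {f : Finset α → ℝ}

def DiminishingReturns (f : Finset α → ℝ) : Prop :=
  ∀ A B : Finset α, A ⊆ B → ∀ j ∉ B, f (insert j B) - f B ≤ f (insert j A) - f A

theorem DiminishingReturns.le_add_sum_marginal (hf : DiminishingReturns f) (A B : Finset α) :
    f (A ∪ B) ≤ f A + ∑ j ∈ B \ A, (f (insert j A) - f A) := by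
  induction B using Finset.induction_on with
  | empty => simp
  | insert b B hbB ih =>
    by_cases hbA : b ∈ A
    · rwa [union_insert, insert_eq_of_mem (mem_union_left _ hbA), insert_sdiff_of_mem _ hbA]
    · have hmarg := hf A (A ∪ B) subset_union_left b (by simp [hbA, hbB])
      rw [union_insert, insert_sdiff_of_notMem _ hbA, sum_insert (by simp [hbB])]
      linarith

theorem DiminishingReturns.sub_le_mul_of_marginal_le (hf : DiminishingReturns f)
    (hmono : Monotone f) {A opt : Finset α} {k : ℕ} {δ : ℝ} (hδ : 0 ≤ δ) (hopt : #opt ≤ k)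
    (hmarg : ∀ j, f (insert j A) - f A ≤ δ) :
    f opt - f A ≤ k * δ := by
  have hcard : (#(opt \ A) : ℝ) ≤ k := by
    exact_mod_cast (card_le_card sdiff_subset).trans hopt
  calc f opt - f A ≤ f (A ∪ opt) - f A := by
        linarith [hmono (subset_union_right : opt ⊆ A ∪ opt)]
    _ ≤ ∑ j ∈ opt \ A, (f (insert j A) - f A) := by linarith [hf.le_add_sum_marginal A opt]
    _ ≤ ∑ _j ∈ opt \ A, δ := sum_le_sum fun j _ => hmarg j
    _ = #(opt \ A) * δ := by rw [sum_const, nsmul_eq_mul]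
    _ ≤ k * δ := mul_le_mul_of_nonneg_right hcard hδ

theorem DiminishingReturns.gap_le_of_greedy_step (hf : DiminishingReturns f) (hmono : Monotone f)
    {A A' opt : Finset α} {k : ℕ} (hk : 0 < k) (hopt : #opt ≤ k) (hAA' : A ⊆ A')
    (hbest : ∀ j, f (insert j A) - f A ≤ f A' - f A) :
    f opt - f A' ≤ (1 - 1 / k) * (f opt - f A) := by
  have hk' : (0 : ℝ) < k := by exact_mod_cast hk
  have hgap := hf.sub_le_mul_of_marginal_le hmono (sub_nonneg.2 (hmono hAA')) hopt hbest
  have hfrac : (f opt - f A) / k ≤ f A' - f A := by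
    rw [div_le_iff₀ hk']
    linarith
  linarith [show (1 - 1 / (k : ℝ)) * (f opt - f A) = f opt - f A - (f opt - f A) / k by ring]

end

theorem exact_greedy_submodular_approx_general
    {α : Type*} [DecidableEq α] (f : Finset α → ℝ)
    (hmono : ∀ A B : Finset α, A ⊆ B → f A ≤ f B)
    (hsub : ∀ (A B : Finset α), A ⊆ B → ∀ j ∉ B,
      f (insert j A) - f A ≥ f (insert j B) - f B)
    (hempty : f ∅ = 0)
    (k : ℕ)
    (S : ℕ → Finset α) (hS0 : S 0 = ∅)
    (hgreedy : ∀ i < k, ∃ j, S (i + 1) = insert j (S i) ∧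
      ∀ j' : α, f (insert j' (S i)) - f (S i) ≤ f (S (i + 1)) - f (S i)) :
    ∀ opt : Finset α, opt.card ≤ k →
      f (S k) ≥ (1 - Real.exp (-1)) * f opt := by
  intro opt hopt
  have hmono' : Monotone f := fun A B h => hmono A B h
  obtain rfl | hk := Nat.eq_zero_or_pos k
  · simp [card_eq_zero.1 (Nat.le_zero.1 hopt), hS0, hempty]
  have hk1 : (1 : ℝ) ≤ k := Nat.one_le_cast.2 hk
  have hopt_nonneg : 0 ≤ f opt := hempty ▸ hmono' (empty_subset opt)
  have hdim : DiminishingReturns f := hsub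
  have hratio : (0 : ℝ) ≤ 1 - 1 / k := sub_nonneg.2 (div_le_one_of_le₀ hk1 k.cast_nonneg)
  have hgap : f opt - f (S k) ≤ (1 - 1 / k) ^ k * (f opt - f (S 0)) := by
    refine le_geom (u := fun i => f opt - f (S i)) hratio k fun i hi => ?_
    obtain ⟨j, hSj, hbest⟩ := hgreedy i hi
    exact hdim.gap_le_of_greedy_step hmono' hk hopt (hSj ▸ subset_insert j (S i)) hbest
  have hdecay : (1 - 1 / k : ℝ) ^ k ≤ Real.exp (-1) :=
    Real.one_sub_div_pow_le_exp_neg hk1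
  rw [hS0, hempty, sub_zero] at hgap
  linarith [mul_le_mul_of_nonneg_right hdecay hopt_nonneg]

theorem exact_greedy_submodular_approx
    {α : Type*} [DecidableEq α] [Fintype α] (f : Finset α → ℝ)
    (hmono : ∀ A B : Finset α, A ⊆ B → f A ≤ f B)
    (hsub : ∀ (A B : Finset α), A ⊆ B → ∀ j ∉ B,
      f (insert j A) - f A ≥ f (insert j B) - f B)
    (hempty : f ∅ = 0) (hnonneg : ∀ A, 0 ≤ f A)
    (k : ℕ) (hk : 1 ≤ k)
    (S : ℕ → Finset α) (hS0 : S 0 = ∅)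
    (hgreedy : ∀ i < k, ∃ j, S (i + 1) = insert j (S i) ∧
      ∀ j' : α, f (insert j' (S i)) - f (S i) ≤ f (S (i + 1)) - f (S i)) :
    ∀ opt : Finset α, opt.card ≤ k →
      f (S k) ≥ (1 - Real.exp (-1)) * f opt :=
  exact_greedy_submodular_approx_general f hmono hsub hempty k S hS0 hgreedy
end
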